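/- Suppose x is a bounded real sequence whose set of sub-limits S(x) = {a_1, a_2, …, a_m} is finite (with the a_j pairwise distinct), and suppose the weight w(a_j) exists for each j. Then x is almost convergent, and for every Banach limit L, L(x) = ∑_{j=1}^m a_j·w(a_j). -/

import Mathlib

open Filter

/-- A bounded real sequence. -/
def IsBddSeq (x : ℕ → ℝ) : Prop := ∃ C : ℝ, ∀ n, |x n| ≤ C

/-- The sup norm of a (bounded) real sequence. -/
noncomputable def supNorm (x : ℕ → ℝ) : ℝ := ⨆ n, |x n|

/-- A Banach limit: a linear functional on the space of bounded real sequences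
(extended arbitrarily to all sequences) that is positive, shift-invariant,
and sends the constant-one sequence to `1`. -/
def IsBanachLimit (L : (ℕ → ℝ) → ℝ) : Prop :=
  (∀ x y : ℕ → ℝ, IsBddSeq x → IsBddSeq y → L (x + y) = L x + L y) ∧
  (∀ (c : ℝ) (x : ℕ → ℝ), IsBddSeq x → L (c • x) = c * L x) ∧
  (∀ x : ℕ → ℝ, IsBddSeq x → (∀ n, 0 ≤ x n) → 0 ≤ L x) ∧
  (∀ x : ℕ → ℝ, IsBddSeq x → L (fun n => x (n + 1)) = L x) ∧
  L (fun _ => 1) = 1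

/-- A bounded sequence is almost convergent if all Banach limits agree on it. -/
def AlmostConvergent (x : ℕ → ℝ) : Prop :=
  ∃ c : ℝ, ∀ L : (ℕ → ℝ) → ℝ, IsBanachLimit L → L x = c

/-- `a` is a sub-limit of `x` if some subsequence of `x` converges to `a`. -/
def IsSubLimit (x : ℕ → ℝ) (a : ℝ) : Prop :=
  ∃ n : ℕ → ℕ, StrictMono n ∧ Tendsto (fun k => x (n k)) atTop (nhds a)

/-- The set of all sub-limits of `x`. -/
def subLimitSet (x : ℕ → ℝ) : Set ℝ := {a | IsSubLimit x a}

/-- `A({k : i ≤ n_k ≤ i + len - 1})`: the number of indices of the subsequence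
given by `n` falling in the window `[i, i + len - 1]`. -/
noncomputable def windowCount (n : ℕ → ℕ) (i len : ℕ) : ℕ :=
  {k : ℕ | i ≤ n k ∧ n k < i + len}.ncard

/-- Upper weight of a subsequence with index map `n`. -/
noncomputable def upperWeight (n : ℕ → ℕ) : ℝ :=
  limsup (fun len : ℕ => ⨆ i : ℕ, (windowCount n i len : ℝ) / len) atTop

/-- Lower weight of a subsequence with index map `n`. -/
noncomputable def lowerWeight (n : ℕ → ℕ) : ℝ :=
  liminf (fun len : ℕ => ⨅ i : ℕ, (windowCount n i len : ℝ) / len) atTop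

/-- `n` indexes an essential subsequence of `x` for the sub-limit `a`:
it converges to `a` and every subsequence of `x` converging to `a` has all
but finitely many of its indices among the `n k`. -/
def IsEssentialSubseq (x : ℕ → ℝ) (a : ℝ) (n : ℕ → ℕ) : Prop :=
  StrictMono n ∧ Tendsto (fun k => x (n k)) atTop (nhds a) ∧
  ∀ m : ℕ → ℕ, StrictMono m → Tendsto (fun t => x (m t)) atTop (nhds a) →
    {t : ℕ | ¬ ∃ k, n k = m t}.Finite

/-- The weight `w(a)` of a sub-limit `a` of `x` exists and equals `w`:
some essential subsequence of `a` has upper weight and lower weight both `w`. -/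
def HasSubLimitWeight (x : ℕ → ℝ) (a : ℝ) (w : ℝ) : Prop :=
  ∃ n : ℕ → ℕ, IsEssentialSubseq x a n ∧ upperWeight n = w ∧ lowerWeight n = w

/-- `A({k : x(k+i) ∈ S, k = 0, …, len-1})`. -/
noncomputable def seqCount (x : ℕ → ℝ) (S : Set ℝ) (i len : ℕ) : ℕ :=
  {k : ℕ | k < len ∧ x (k + i) ∈ S}.ncard

/-- The weight of `x` with respect to `S` exists and equals `w`:
`A({k : x(k+i) ∈ S, k = 0,…,n-1})/n → w` as `n → ∞`, uniformly in `i`. -/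
def HasSetWeight (x : ℕ → ℝ) (S : Set ℝ) (w : ℝ) : Prop :=
  ∀ ε : ℝ, 0 < ε → ∃ N : ℕ, ∀ n ≥ N, ∀ i : ℕ,
    |(seqCount x S i n : ℝ) / n - w| < ε

/-- `x` is properly distributed: every Borel subset of `[-‖x‖∞, ‖x‖∞]`
has a weight with respect to `x`. -/
def ProperlyDistributed (x : ℕ → ℝ) : Prop :=
  ∀ S : Set ℝ, MeasurableSet S → S ⊆ Set.Icc (-(supNorm x)) (supNorm x) →
    ∃ w : ℝ, HasSetWeight x S w

/-- `s` is simply distributed: it takes finitely many values, and each value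
has a weight with respect to `s`. -/
def SimplyDistributed (s : ℕ → ℝ) : Prop :=
  (Set.range s).Finite ∧ ∀ a ∈ Set.range s, ∃ w : ℝ, HasSetWeight s {a} w

/-! Let `R j` be the index set of an essential subsequence of `a j`. A bounded sequence has a
sub-limit along every infinite set of indices, so the `R j` cover all but finitely many indices,
and two of them meet only finitely often because `x` tends to distinct limits along them. Hence
`x - ∑ a j • 𝟙_{R j}` tends to `0`, and every Banach limit kills it. By shift invariance a Banach
limit of `𝟙_R` lies between the infimum and the supremum over `i` of the window averages
`A(R ∩ [i, i + len)) / len`, hence between the lower and the upper weight of `R`. -/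

open Topology

section BoundedSequences

variable {x y : ℕ → ℝ}

theorem IsBddSeq.const (c : ℝ) : IsBddSeq fun _ => c := ⟨|c|, fun _ => le_rfl⟩

theorem IsBddSeq.add (hx : IsBddSeq x) (hy : IsBddSeq y) : IsBddSeq (x + y) := by
  obtain ⟨C, hC⟩ := hx
  obtain ⟨D, hD⟩ := hy
  exact ⟨C + D, fun n => (abs_add_le _ _).trans (add_le_add (hC n) (hD n))⟩

theorem IsBddSeq.sub (hx : IsBddSeq x) (hy : IsBddSeq y) : IsBddSeq (x - y) := by
  obtain ⟨C, hC⟩ := hx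
  obtain ⟨D, hD⟩ := hy
  exact ⟨C + D, fun n => (abs_sub _ _).trans (add_le_add (hC n) (hD n))⟩

theorem IsBddSeq.smul (c : ℝ) (hx : IsBddSeq x) : IsBddSeq (c • x) := by
  obtain ⟨C, hC⟩ := hx
  exact ⟨|c| * C, fun n => by
    simpa [abs_mul] using mul_le_mul_of_nonneg_left (hC n) (abs_nonneg c)⟩

theorem IsBddSeq.sum {ι : Type*} {s : Finset ι} {f : ι → ℕ → ℝ}
    (hf : ∀ j ∈ s, IsBddSeq (f j)) : IsBddSeq (∑ j ∈ s, f j) :=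
  Finset.sum_induction f IsBddSeq (fun _ _ => IsBddSeq.add) (IsBddSeq.const 0) hf

theorem IsBddSeq.comp_add (hx : IsBddSeq x) (k : ℕ) : IsBddSeq fun n => x (n + k) := by
  obtain ⟨C, hC⟩ := hx
  exact ⟨C, fun n => hC (n + k)⟩

theorem IsBddSeq.of_tendsto {c : ℝ} (h : Tendsto x atTop (𝓝 c)) : IsBddSeq x := by
  obtain ⟨C, hC⟩ := isBounded_iff_forall_norm_le.1 (Metric.isBounded_range_of_tendsto x h)
  exact ⟨C, fun n => hC (x n) (Set.mem_range_self n)⟩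

theorem IsBddSeq.indicator_one (s : Set ℕ) : IsBddSeq (s.indicator 1) :=
  ⟨1, fun n => by by_cases hn : n ∈ s <;> simp [hn]⟩

end BoundedSequences

section WindowCount

variable {n : ℕ → ℕ}

theorem windowCount_eq_ncard_inter_range (hn : Function.Injective n) (i len : ℕ) :
    windowCount n i len = (Set.Ico i (i + len) ∩ Set.range n).ncard := by
  rw [← Set.image_preimage_eq_inter_range, Set.ncard_image_of_injective _ hn]
  rfl

theorem windowCount_le (hn : Function.Injective n) (i len : ℕ) : windowCount n i len ≤ len := by
  rw [windowCount_eq_ncard_inter_range hn]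
  calc (Set.Ico i (i + len) ∩ Set.range n).ncard ≤ (Set.Ico i (i + len)).ncard :=
        Set.ncard_le_ncard Set.inter_subset_left (Set.finite_Ico _ _)
    _ = len := by simp

theorem windowCount_eq_sum_indicator (hn : Function.Injective n) (i len : ℕ) :
    (windowCount n i len : ℝ) = ∑ k ∈ Finset.range len, (Set.range n).indicator 1 (i + k) := by
  classical
  have hcoe : Set.Ico i (i + len) ∩ Set.range n =
      ↑((Finset.Ico i (i + len)).filter (· ∈ Set.range n)) := by
    ext q
    simp
  rw [windowCount_eq_ncard_inter_range hn, hcoe, Set.ncard_coe_finset, Finset.card_filter,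
    Nat.cast_sum, Finset.sum_Ico_eq_sum_range, add_tsub_cancel_left]
  simp [Set.indicator_apply]

end WindowCount

namespace IsBanachLimit

variable {L : (ℕ → ℝ) → ℝ} {x y : ℕ → ℝ}

theorem map_add (hL : IsBanachLimit L) (hx : IsBddSeq x) (hy : IsBddSeq y) :
    L (x + y) = L x + L y :=
  hL.1 x y hx hy

theorem map_smul (hL : IsBanachLimit L) (c : ℝ) (hx : IsBddSeq x) : L (c • x) = c * L x :=
  hL.2.1 c x hx

theorem map_const (hL : IsBanachLimit L) (c : ℝ) : L (fun _ => c) = c := by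
  simpa [Pi.smul_def, hL.2.2.2.2] using hL.map_smul c (IsBddSeq.const 1)

theorem mono (hL : IsBanachLimit L) (hx : IsBddSeq x) (hy : IsBddSeq y) (h : ∀ n, x n ≤ y n) :
    L x ≤ L y := by
  have hpos : 0 ≤ L (y - x) := hL.2.2.1 _ (hy.sub hx) fun n => sub_nonneg.2 (h n)
  have hsplit := hL.map_add hx (hy.sub hx)
  rw [add_sub_cancel] at hsplit
  linarith

theorem map_comp_add (hL : IsBanachLimit L) (hx : IsBddSeq x) (k : ℕ) :
    L (fun n => x (n + k)) = L x := by
  induction k with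
  | zero => rfl
  | succ k ih =>
    rw [← ih, ← hL.2.2.2.1 _ (hx.comp_add k)]
    simp only [Nat.add_right_comm _ 1 k, Nat.add_assoc]

theorem map_sum (hL : IsBanachLimit L) {ι : Type*} (s : Finset ι) {f : ι → ℕ → ℝ}
    (hf : ∀ j ∈ s, IsBddSeq (f j)) : L (∑ j ∈ s, f j) = ∑ j ∈ s, L (f j) := by
  classical
  induction s using Finset.induction_on with
  | empty =>
    rw [Finset.sum_empty, Finset.sum_empty]
    exact hL.map_const 0
  | insert j s hj ih =>
    rw [Finset.sum_insert hj, Finset.sum_insert hj,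
      hL.map_add (hf j (s.mem_insert_self j)) (IsBddSeq.sum fun i hi => hf i (by simp [hi])),
      ih fun i hi => hf i (by simp [hi])]

theorem eq_of_tendsto (hL : IsBanachLimit L) {c : ℝ} (h : Tendsto x atTop (𝓝 c)) : L x = c := by
  have hx := IsBddSeq.of_tendsto h
  refine eq_of_forall_dist_le fun ε hε => ?_
  obtain ⟨N, hN⟩ := Metric.tendsto_atTop.1 h ε hε
  have hclose : ∀ n, |x (n + N) - c| ≤ ε := fun n => (hN (n + N) (by omega)).le
  rw [Real.dist_eq, ← hL.map_comp_add hx N, abs_le]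
  constructor
  · have := hL.mono (IsBddSeq.const (c - ε)) (hx.comp_add N) fun n => by
      linarith [(abs_le.1 (hclose n)).1]
    linarith [hL.map_const (c - ε)]
  · have := hL.mono (hx.comp_add N) (IsBddSeq.const (c + ε)) fun n => by
      linarith [(abs_le.1 (hclose n)).2]
    linarith [hL.map_const (c + ε)]

theorem map_windowSum (hL : IsBanachLimit L) (hx : IsBddSeq x) (len : ℕ) :
    L (∑ k ∈ Finset.range len, fun i => x (i + k)) = len * L x := by
  simp [hL.map_sum _ fun k _ => hx.comp_add k, hL.map_comp_add hx]

theorem le_of_le_windowSum (hL : IsBanachLimit L) (hx : IsBddSeq x) {len : ℕ} (hlen : 0 < len)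
    {c : ℝ} (h : ∀ i, len * c ≤ ∑ k ∈ Finset.range len, x (i + k)) : c ≤ L x := by
  have hbdd : IsBddSeq (∑ k ∈ Finset.range len, fun i => x (i + k)) :=
    IsBddSeq.sum fun k _ => hx.comp_add k
  have : (len : ℝ) * c ≤ len * L x := by
    rw [← hL.map_windowSum hx, ← hL.map_const (len * c)]
    exact hL.mono (IsBddSeq.const _) hbdd fun i => by simpa using h i
  exact le_of_mul_le_mul_left this (by exact_mod_cast hlen)

theorem le_of_windowSum_le (hL : IsBanachLimit L) (hx : IsBddSeq x) {len : ℕ} (hlen : 0 < len)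
    {c : ℝ} (h : ∀ i, ∑ k ∈ Finset.range len, x (i + k) ≤ len * c) : L x ≤ c := by
  have hbdd : IsBddSeq (∑ k ∈ Finset.range len, fun i => x (i + k)) :=
    IsBddSeq.sum fun k _ => hx.comp_add k
  have : (len : ℝ) * L x ≤ len * c := by
    rw [← hL.map_windowSum hx, ← hL.map_const (len * c)]
    exact hL.mono hbdd (IsBddSeq.const _) fun i => by simpa using h i
  exact le_of_mul_le_mul_left this (by exact_mod_cast hlen)

theorem eq_sum_of_tendsto_sub_sum (hL : IsBanachLimit L)
    {ι : Type*} [Fintype ι] (hx : IsBddSeq x) {y : ι → ℕ → ℝ}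
    (hy : ∀ j, IsBddSeq (y j)) (c : ι → ℝ)
    (h : Tendsto (fun q => x q - ∑ j, c j * y j q) atTop (𝓝 0)) :
    L x = ∑ j, c j * L (y j) := by
  set s := ∑ j, c j • y j
  have hs : IsBddSeq s := IsBddSeq.sum fun j _ => (hy j).smul (c j)
  have hxs : x - s = fun q => x q - ∑ j, c j * y j q := by
    ext q
    simp [s, Finset.sum_apply]
  have hsmall : L (x - s) = 0 := hL.eq_of_tendsto (hxs ▸ h)
  calc L x = L (x - s + s) := by rw [sub_add_cancel]
    _ = L s := by rw [hL.map_add (hx.sub hs) hs, hsmall, zero_add]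
    _ = ∑ j, c j * L (y j) := by
      rw [hL.map_sum _ fun j _ => (hy j).smul (c j)]
      exact Finset.sum_congr rfl fun j _ => hL.map_smul (c j) (hy j)

variable {n : ℕ → ℕ}

theorem map_indicator_range_le_iSup (hL : IsBanachLimit L) (hn : Function.Injective n) {len : ℕ}
    (hlen : 0 < len) :
    L ((Set.range n).indicator 1) ≤ ⨆ i, (windowCount n i len : ℝ) / len := by
  have hbdd : BddAbove (Set.range fun i => (windowCount n i len : ℝ) / len) :=
    ⟨1, Set.forall_mem_range.2 fun i =>
      div_le_one_of_le₀ (by exact_mod_cast windowCount_le hn i len) (Nat.cast_nonneg _)⟩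
  refine hL.le_of_windowSum_le (IsBddSeq.indicator_one _) hlen fun i => ?_
  rw [← windowCount_eq_sum_indicator hn, ← div_le_iff₀' (by exact_mod_cast hlen)]
  exact le_ciSup hbdd i

theorem iInf_le_map_indicator_range (hL : IsBanachLimit L) (hn : Function.Injective n) {len : ℕ}
    (hlen : 0 < len) :
    ⨅ i, (windowCount n i len : ℝ) / len ≤ L ((Set.range n).indicator 1) := by
  have hbdd : BddBelow (Set.range fun i => (windowCount n i len : ℝ) / len) :=
    ⟨0, Set.forall_mem_range.2 fun i => by positivity⟩
  refine hL.le_of_le_windowSum (IsBddSeq.indicator_one _) hlen fun i => ?_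
  rw [← windowCount_eq_sum_indicator hn, ← le_div_iff₀' (by exact_mod_cast hlen)]
  exact ciInf_le hbdd i

theorem map_indicator_range_le_upperWeight (hL : IsBanachLimit L) (hn : Function.Injective n) :
    L ((Set.range n).indicator 1) ≤ upperWeight n := by
  refine le_limsup_of_frequently_le
    ((eventually_gt_atTop 0).mono fun len => hL.map_indicator_range_le_iSup hn).frequently
    (isBoundedUnder_of ⟨1, fun len => Real.iSup_le (fun i => ?_) zero_le_one⟩)
  exact div_le_one_of_le₀ (by exact_mod_cast windowCount_le hn i len) (Nat.cast_nonneg _)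

theorem lowerWeight_le_map_indicator_range (hL : IsBanachLimit L) (hn : Function.Injective n) :
    lowerWeight n ≤ L ((Set.range n).indicator 1) :=
  liminf_le_of_frequently_le
    ((eventually_gt_atTop 0).mono fun len => hL.iInf_le_map_indicator_range hn).frequently
    (isBoundedUnder_of ⟨0, fun len => le_ciInf fun i => by positivity⟩)

theorem map_indicator_range_eq (hL : IsBanachLimit L) (hn : Function.Injective n) {v : ℝ}
    (hup : upperWeight n = v) (hlow : lowerWeight n = v) :
    L ((Set.range n).indicator 1) = v :=
  le_antisymm (hup ▸ hL.map_indicator_range_le_upperWeight hn)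
    (hlow ▸ hL.lowerWeight_le_map_indicator_range hn)

end IsBanachLimit

theorem tendsto_cofinite_inf_principal_range {α β γ : Type*} {n : β → α} {f : α → γ}
    {l : Filter γ} (h : Tendsto (f ∘ n) cofinite l) :
    Tendsto f (cofinite ⊓ 𝓟 (Set.range n)) l := by
  intro s hs
  rw [mem_map, mem_inf_principal, mem_cofinite]
  refine ((mem_cofinite.1 (h hs)).image n).subset ?_
  rintro _ hq
  simp only [Set.mem_compl_iff, Set.mem_ofPred_eq, Classical.not_imp] at hq
  obtain ⟨⟨k, rfl⟩, hk⟩ := hq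
  exact ⟨k, hk, rfl⟩

theorem IsBddSeq.exists_tendsto_subseq_of_infinite {x : ℕ → ℝ} (hx : IsBddSeq x) {S : Set ℕ}
    (hS : S.Infinite) :
    ∃ b, ∃ m : ℕ → ℕ, StrictMono m ∧ (∀ t, m t ∈ S) ∧ Tendsto (fun t => x (m t)) atTop (𝓝 b) := by
  obtain ⟨C, hC⟩ := hx
  obtain ⟨b, -, φ, hφ, hb⟩ := tendsto_subseq_of_bounded (Metric.isBounded_Icc (-C) C)
    fun t => Set.mem_Icc.2 (abs_le.1 (hC (Nat.nth (· ∈ S) t)))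
  exact ⟨b, _, (Nat.nth_strictMono hS).comp hφ, fun t => Nat.nth_mem_of_infinite hS (φ t), hb⟩

theorem finite_compl_iUnion_range_of_isEssentialSubseq {ι : Type*} {x : ℕ → ℝ}
    (hx : IsBddSeq x) {a : ι → ℝ} (ha : subLimitSet x ⊆ Set.range a) {n : ι → ℕ → ℕ}
    (hn : ∀ j, IsEssentialSubseq x (a j) (n j)) : (⋃ j, Set.range (n j))ᶜ.Finite := by
  by_contra hinf
  obtain ⟨b, m, hm, hmS, hb⟩ := hx.exists_tendsto_subseq_of_infinite hinf
  obtain ⟨j, rfl⟩ := ha ⟨m, hm, hb⟩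
  refine Set.infinite_univ (((hn j).2.2 m hm hb).subset fun t _ => ?_)
  rintro ⟨k, hk⟩
  exact hmS t (Set.mem_iUnion.2 ⟨j, k, hk⟩)

theorem tendsto_sub_sum_mul_indicator {α ι : Type*} [Fintype ι] {x : α → ℝ} {a : ι → ℝ}
    (ha : Function.Injective a) {R : ι → Set α}
    (hR : ∀ j, Tendsto x (cofinite ⊓ 𝓟 (R j)) (𝓝 (a j))) (hcover : (⋃ j, R j)ᶜ.Finite) :
    Tendsto (fun q => x q - ∑ j, a j * (R j).indicator 1 q) cofinite (𝓝 0) := by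
  classical
  have hdisj : ∀ j j', j ≠ j' → (R j ∩ R j').Finite := by
    intro j j' hne
    by_contra hinf
    have := Set.Infinite.cofinite_inf_principal_neBot (s := R j ∩ R j') hinf
    refine hne (ha (tendsto_nhds_unique (l := cofinite ⊓ 𝓟 (R j ∩ R j'))
      ((hR j).mono_left ?_) ((hR j').mono_left ?_))) <;>
      exact inf_le_inf_left _ (principal_mono.2 (by simp))
  have hlocal : ∀ j, Tendsto (fun q => x q - ∑ j, a j * (R j).indicator 1 q)
      (cofinite ⊓ 𝓟 (R j)) (𝓝 0) := by
    intro j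
    have hsum : ∀ᶠ q in cofinite ⊓ 𝓟 (R j), ∑ j', a j' * (R j').indicator 1 q = a j := by
      have hout : ∀ᶠ q in cofinite, ∀ j', j' ≠ j → q ∉ R j ∩ R j' :=
        eventually_all.2 fun j' => eventually_imp_distrib_left.2 fun hne =>
          (hdisj j j' hne.symm).eventually_cofinite_notMem
      filter_upwards [hout.filter_mono inf_le_left, mem_inf_of_right (mem_principal_self _)]
        with q hq hqj
      rw [Finset.sum_eq_single j (fun j' _ hne => by
        rw [Set.indicator_of_notMem fun h => hq j' hne ⟨hqj, h⟩, mul_zero]) (by simp)]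
      simp [hqj]
    simpa using ((hR j).sub_const (a j)).congr' (hsum.mono fun q hq => by rw [hq])
  refine (tendsto_iSup.2 hlocal).mono_left fun s hs => ?_
  simp only [mem_iSup, mem_inf_principal', mem_cofinite] at hs ⊢
  refine (hcover.union (Set.finite_iUnion hs)).subset fun q hq => ?_
  by_cases hqR : q ∈ ⋃ j, R j
  · obtain ⟨j, hj⟩ := Set.mem_iUnion.1 hqR
    exact Or.inr (Set.mem_iUnion.2 ⟨j, by simp_all⟩)
  · exact Or.inl hqR

/-- If the sub-limit set of a bounded sequence `x` is finite,
`{a 0, …, a (m-1)}`, and the weight `w(a_j)` exists for each `j`, then `x` is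
almost convergent and every Banach limit of `x` equals `∑ a_j · w(a_j)`. -/
theorem almostConvergent_of_finite_subLimitSet_weights (x : ℕ → ℝ)
    (hx : IsBddSeq x) (m : ℕ) (a : Fin m → ℝ) (hinj : Function.Injective a)
    (hS : subLimitSet x = Set.range a) (w : Fin m → ℝ)
    (hw : ∀ j, HasSubLimitWeight x (a j) (w j)) :
    AlmostConvergent x ∧
      ∀ L : (ℕ → ℝ) → ℝ, IsBanachLimit L → L x = ∑ j, a j * w j := by
  choose n hn hup hlow using hw
  have hdecomp : Tendsto (fun q => x q - ∑ j, a j * (Set.range (n j)).indicator 1 q)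
      atTop (𝓝 0) := by
    rw [← Nat.cofinite_eq_atTop]
    refine tendsto_sub_sum_mul_indicator hinj (fun j => ?_)
      (finite_compl_iUnion_range_of_isEssentialSubseq hx hS.subset hn)
    exact tendsto_cofinite_inf_principal_range (Nat.cofinite_eq_atTop ▸ (hn j).2.1)
  have hvalue : ∀ L : (ℕ → ℝ) → ℝ, IsBanachLimit L → L x = ∑ j, a j * w j := by
    intro L hL
    rw [hL.eq_sum_of_tendsto_sub_sum hx (fun j => IsBddSeq.indicator_one _) a hdecomp]
    exact Finset.sum_congr rfl fun j _ => by
      rw [hL.map_indicator_range_eq (hn j).1.injective (hup j) (hlow j)]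
  exact ⟨⟨_, hvalue⟩, hvalue⟩
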